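/- An adjacent-transposition exchange argument for the cascade objective: let p ∈ [0,1]^m, F : ℕ → [1,∞) strictly increasing, and let π be a permutation with p_{π⁻¹(i)} < p_{π⁻¹(i+1)} for some position i < m. Let π' be the permutation obtained from π by swapping the items in positions i and i+1. Then R(π') ≥ R(π), where R(π) = Σ_{i=1}^m (1/F(i)) p_{π⁻¹(i)} Π_{j<i} (1 - p_{π⁻¹(j)}). -/

import Mathlib

/-!
Only the two swapped positions change their contribution: for every other position `k` the
set of items ranked above `k` is unchanged, so its prefix product is too. If `P` is the product
of `1 - p` over the first `i` positions, `a < b` the two probabilities and `w₁ ≥ w₂` the weights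
`1 / F` at the two positions, the reward changes by
`(w₁ b + w₂ a (1 - b) - w₁ a - w₂ b (1 - a)) P = (w₁ - w₂) (b - a) P ≥ 0`.
-/

open Finset

/-- The expected reciprocal rank reward of an ordering `π` under a cascade model:
`R(π) = ∑ i, (1/F(i)) p_{π⁻¹(i)} ∏_{j<i} (1 - p_{π⁻¹(j)})`, where `π.symm i` is the
item placed at position `i` (positions 0-indexed; `F` is evaluated at `i+1`). -/
noncomputable def errReward (m : ℕ) (p : Fin m → ℝ) (F : ℕ → ℝ)
    (π : Equiv.Perm (Fin m)) : ℝ :=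
  ∑ i : Fin m, (1 / F ((i : ℕ) + 1)) * p (π.symm i) *
    ∏ j ∈ Finset.Iio i, (1 - p (π.symm j))

open Equiv

theorem Finset.prod_comp_swap_of_mem_iff {ι M : Type*} [DecidableEq ι] [CommMonoid M]
    {s : Finset ι} {a b : ι} (hab : a ∈ s ↔ b ∈ s) (f : ι → M) :
    ∏ x ∈ s, f (swap a b x) = ∏ x ∈ s, f x := by
  by_cases ha : a ∈ s
  · refine Perm.prod_comp _ s f fun x hx => ?_
    rcases (swap_apply_ne_self_iff.1 hx).2 with rfl | rfl
    exacts [ha, hab.1 ha]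
  · refine prod_congr rfl fun x hx => congrArg f (swap_apply_of_ne_of_ne ?_ ?_)
    exacts [ne_of_mem_of_not_mem hx ha, ne_of_mem_of_not_mem hx (hab.not.1 ha)]

section CascadeReward

variable {α : Type*} [LinearOrder α] [LocallyFiniteOrderBot α]

theorem Finset.Iio_eq_insert_of_covBy {a b : α} (hab : a ⋖ b) : Iio b = insert a (Iio a) := by
  rw [Iio_insert, ← coe_inj, coe_Iio, coe_Iic, hab.Iio_eq]

variable [Fintype α]

noncomputable def cascadeReward (w q : α → ℝ) : ℝ :=
  ∑ k, w k * q k * ∏ j ∈ Iio k, (1 - q j)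

theorem cascadeReward_comp_swap_sub {a b : α} (hab : a ⋖ b) (w q : α → ℝ) :
    cascadeReward w (q ∘ swap a b) - cascadeReward w q =
      (w a - w b) * (q b - q a) * ∏ j ∈ Iio a, (1 - q j) := by
  unfold cascadeReward
  rw [← sum_sub_distrib, Fintype.sum_eq_add a b hab.ne]
  · have hIio_a := prod_comp_swap_of_mem_iff (s := Iio a) (a := a) (b := b)
      (by simp [hab.lt.le]) fun j => 1 - q j
    rw [Iio_eq_insert_of_covBy hab, prod_insert (by simp), prod_insert (by simp)]
    simp only [Function.comp_apply, swap_apply_left, swap_apply_right] at hIio_a ⊢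
    rw [hIio_a]
    ring
  · rintro k ⟨hka, hkb⟩
    have hlt : a < k ↔ b < k := hab.lt_iff_le_right.trans (Ne.le_iff_lt (Ne.symm hkb))
    simp only [Function.comp_apply, swap_apply_of_ne_of_ne hka hkb,
      prod_comp_swap_of_mem_iff (s := Iio k) (by simpa using hlt) fun j => 1 - q j, sub_self]

end CascadeReward

/-- Adjacent-transposition exchange: if the item at position `i` has strictly smaller
satisfaction probability than the item at position `i+1`, swapping them does not
decrease the cascade reward. -/
theorem err_adjacent_swap (m : ℕ) (p : Fin m → ℝ)
    (hp : ∀ i, p i ∈ Set.Icc (0 : ℝ) 1)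
    (F : ℕ → ℝ) (hF : StrictMono F) (hF1 : ∀ n, 1 ≤ F n)
    (π : Equiv.Perm (Fin m)) (i : Fin m) (hi : (i : ℕ) + 1 < m)
    (hlt : p (π.symm i) < p (π.symm ⟨(i : ℕ) + 1, hi⟩)) :
    errReward m p F π ≤ errReward m p F (π.trans (Equiv.swap i ⟨(i : ℕ) + 1, hi⟩)) := by
  set i' : Fin m := ⟨(i : ℕ) + 1, hi⟩
  have hcov : i ⋖ i' := Fin.covBy_iff.2 (Nat.covBy_iff_add_one_eq.2 rfl)
  have hweight : 1 / F (i' + 1) ≤ 1 / F (i + 1) :=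
    one_div_le_one_div_of_le (by linarith [hF1 (i + 1)]) (hF.monotone (by simp [i']))
  have hprefix : 0 ≤ ∏ j ∈ Iio i, (1 - p (π.symm j)) :=
    prod_nonneg fun j _ => sub_nonneg.2 (hp _).2
  rw [← sub_nonneg]
  change 0 ≤ cascadeReward _ ((p ∘ π.symm) ∘ swap i i') - cascadeReward _ (p ∘ π.symm)
  rw [cascadeReward_comp_swap_sub hcov]
  exact mul_nonneg (mul_nonneg (sub_nonneg.2 hweight) (sub_nonneg.2 hlt.le)) hprefix
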